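/- (Newton's equations are Lagrange's equations, d = 0, b ≠ 0) Let a ≠ 0, b ≠ 0, c ≠ 0 and L(q1, q2, q̇1, q̇2) = (a/4)q̇1² + ((c/b)q̇2 − (a/(4b²))q̇2²)e^{−a q1}. A twice-differentiable curve (q1(t), q2(t)) satisfies the Euler–Lagrange equations d/dt(∂L/∂q̇1) − ∂L/∂q1 = 0 and d/dt(∂L/∂q̇2) − ∂L/∂q2 = 0 if and only if it satisfies Newton's equations q̈1 − (a/(2b²))e^{−a q1} q̇2² + (2c/b)e^{−a q1} q̇2 = 0 and q̈2 − a q̇1 q̇2 + 2bc q̇1 = 0. -/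

import Mathlib

/-- The Lagrangian `L(q₁,q₂,q̇₁,q̇₂) = (a/4)q̇₁² + ((c/b)q̇₂ − (a/(4b²))q̇₂²)e^{−aq₁}`,
as a function of `(v 0, v 1, v 2, v 3) = (q₁, q₂, q̇₁, q̇₂)`. -/
noncomputable def lagrangianD0 (a b c : ℝ) : (Fin 4 → ℝ) → ℝ :=
  fun v => a / 4 * (v 2) ^ 2
    + (c / b * v 3 - a / (4 * b ^ 2) * (v 3) ^ 2) * Real.exp (-a * v 0)

/-! `q₂` is cyclic, so the second Euler–Lagrange equation says that the momentum
`(c/b − (a/(2b²))q̇₂)e^{−aq₁}` is conserved; differentiating it produces the nonvanishing factor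
`−(a/(2b²))e^{−aq₁}` times Newton's second equation. The first Euler–Lagrange equation is
`a/2` times Newton's first one. -/

namespace lagrangianD0

open ContinuousLinearMap

variable (a b c : ℝ)

theorem hasFDerivAt (x : Fin 4 → ℝ) :
    HasFDerivAt (lagrangianD0 a b c)
      ((-a * (c / b * x 3 - a / (4 * b ^ 2) * x 3 ^ 2) * Real.exp (-a * x 0)) •
          proj (R := ℝ) (φ := fun _ : Fin 4 => ℝ) 0
        + (a / 2 * x 2) • proj (R := ℝ) (φ := fun _ : Fin 4 => ℝ) 2
        + ((c / b - a / (2 * b ^ 2) * x 3) * Real.exp (-a * x 0)) •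
          proj (R := ℝ) (φ := fun _ : Fin 4 => ℝ) 3) x := by
  have h₀ := hasFDerivAt_apply (𝕜 := ℝ) (F' := fun _ : Fin 4 => ℝ) 0 x
  have h₂ := hasFDerivAt_apply (𝕜 := ℝ) (F' := fun _ : Fin 4 => ℝ) 2 x
  have h₃ := hasFDerivAt_apply (𝕜 := ℝ) (F' := fun _ : Fin 4 => ℝ) 3 x
  have hL := ((h₂.pow 2).const_mul (a / 4)).add
    (((h₃.const_mul (c / b)).sub ((h₃.pow 2).const_mul (a / (4 * b ^ 2)))).mul
      (h₀.const_mul (-a)).exp)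
  refine hL.congr_fderiv ?_
  ext v
  simp only [nsmul_eq_mul, add_apply, smul_apply, sub_apply, Pi.sub_apply, proj_apply, smul_eq_mul]
  ring

theorem fderiv_single_zero (x : Fin 4 → ℝ) :
    fderiv ℝ (lagrangianD0 a b c) x (Pi.single 0 1)
      = -a * (c / b * x 3 - a / (4 * b ^ 2) * x 3 ^ 2) * Real.exp (-a * x 0) := by
  simp [(hasFDerivAt a b c x).fderiv]

theorem fderiv_single_one (x : Fin 4 → ℝ) :
    fderiv ℝ (lagrangianD0 a b c) x (Pi.single 1 1) = 0 := by
  simp [(hasFDerivAt a b c x).fderiv]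

theorem fderiv_single_two (x : Fin 4 → ℝ) :
    fderiv ℝ (lagrangianD0 a b c) x (Pi.single 2 1) = a / 2 * x 2 := by
  simp [(hasFDerivAt a b c x).fderiv]

theorem fderiv_single_three (x : Fin 4 → ℝ) :
    fderiv ℝ (lagrangianD0 a b c) x (Pi.single 3 1)
      = (c / b - a / (2 * b ^ 2) * x 3) * Real.exp (-a * x 0) := by
  simp [(hasFDerivAt a b c x).fderiv]

variable {q₁ q₂ q₁' q₂' q₁'' q₂'' : ℝ → ℝ} {t : ℝ}

theorem hasDerivAt_momentum₁ (hq₁' : HasDerivAt q₁' (q₁'' t) t) :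
    HasDerivAt (fun s => fderiv ℝ (lagrangianD0 a b c)
      ![q₁ s, q₂ s, q₁' s, q₂' s] (Pi.single 2 1)) (a / 2 * q₁'' t) t := by
  simpa [fderiv_single_two] using hq₁'.const_mul (a / 2)

theorem hasDerivAt_momentum₂ (hq₁ : HasDerivAt q₁ (q₁' t) t)
    (hq₂' : HasDerivAt q₂' (q₂'' t) t) :
    HasDerivAt (fun s => fderiv ℝ (lagrangianD0 a b c)
      ![q₁ s, q₂ s, q₁' s, q₂' s] (Pi.single 3 1))
      (-(a / (2 * b ^ 2) * q₂'' t) * Real.exp (-a * q₁ t)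
        + (c / b - a / (2 * b ^ 2) * q₂' t) * (Real.exp (-a * q₁ t) * (-a * q₁' t))) t := by
  simpa [fderiv_single_three, Pi.mul_def] using
    ((hq₂'.const_mul (a / (2 * b ^ 2))).const_sub (c / b)).mul (hq₁.const_mul (-a)).exp

end lagrangianD0

variable {a b c : ℝ}

theorem euler_lagrange₁_iff (ha : a ≠ 0) (e x'' v : ℝ) :
    a / 2 * x'' = -a * (c / b * v - a / (4 * b ^ 2) * v ^ 2) * e
      ↔ x'' - a / (2 * b ^ 2) * e * v ^ 2 + 2 * c / b * e * v = 0 := by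
  have key : a / 2 * x'' - -a * (c / b * v - a / (4 * b ^ 2) * v ^ 2) * e
      = a / 2 * (x'' - a / (2 * b ^ 2) * e * v ^ 2 + 2 * c / b * e * v) := by ring
  rw [← sub_eq_zero, key, mul_eq_zero, or_iff_right (div_ne_zero ha two_ne_zero)]

theorem euler_lagrange₂_iff (ha : a ≠ 0) (hb : b ≠ 0) {e : ℝ} (he : e ≠ 0) (x' v y'' : ℝ) :
    -(a / (2 * b ^ 2) * y'') * e + (c / b - a / (2 * b ^ 2) * v) * (e * (-a * x')) = 0
      ↔ y'' - a * x' * v + 2 * b * c * x' = 0 := by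
  have key : -(a / (2 * b ^ 2) * y'') * e + (c / b - a / (2 * b ^ 2) * v) * (e * (-a * x'))
      = -(a / (2 * b ^ 2)) * e * (y'' - a * x' * v + 2 * b * c * x') := by
    field_simp
    ring
  have hk : -(a / (2 * b ^ 2)) * e ≠ 0 := by simp [ha, hb, he]
  rw [key, mul_eq_zero, or_iff_right hk]

theorem euler_lagrange_iff_newton_general (a b c : ℝ) (ha : a ≠ 0) (hb : b ≠ 0)
    (q₁ q₂ q₁' q₂' q₁'' q₂'' : ℝ → ℝ)
    (hq₁ : ∀ t, HasDerivAt q₁ (q₁' t) t)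
    (hq₁' : ∀ t, HasDerivAt q₁' (q₁'' t) t) (hq₂' : ∀ t, HasDerivAt q₂' (q₂'' t) t) :
    ((∀ t, deriv (fun s => fderiv ℝ (lagrangianD0 a b c)
            ![q₁ s, q₂ s, q₁' s, q₂' s] (Pi.single 2 1)) t
          = fderiv ℝ (lagrangianD0 a b c) ![q₁ t, q₂ t, q₁' t, q₂' t] (Pi.single 0 1))
      ∧ (∀ t, deriv (fun s => fderiv ℝ (lagrangianD0 a b c)
            ![q₁ s, q₂ s, q₁' s, q₂' s] (Pi.single 3 1)) t
          = fderiv ℝ (lagrangianD0 a b c) ![q₁ t, q₂ t, q₁' t, q₂' t] (Pi.single 1 1)))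
    ↔ ((∀ t, q₁'' t - a / (2 * b ^ 2) * Real.exp (-a * q₁ t) * (q₂' t) ^ 2
              + 2 * c / b * Real.exp (-a * q₁ t) * q₂' t = 0)
      ∧ (∀ t, q₂'' t - a * q₁' t * q₂' t + 2 * b * c * q₁' t = 0)) := by
  refine and_congr (forall_congr' fun t => ?_) (forall_congr' fun t => ?_)
  · rw [(lagrangianD0.hasDerivAt_momentum₁ a b c (hq₁' t)).deriv,
      lagrangianD0.fderiv_single_zero]
    exact euler_lagrange₁_iff ha _ _ _
  · rw [(lagrangianD0.hasDerivAt_momentum₂ a b c (hq₁ t) (hq₂' t)).deriv,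
      lagrangianD0.fderiv_single_one]
    exact euler_lagrange₂_iff ha hb (Real.exp_ne_zero _) _ _ _

/-- Newton's equations for `d = 0`, `b ≠ 0` are the Euler–Lagrange equations of
`L = (a/4)q̇₁² + ((c/b)q̇₂ − (a/(4b²))q̇₂²)e^{−aq₁}`: a twice-differentiable curve
satisfies `d/dt(∂L/∂q̇ᵢ) = ∂L/∂qᵢ` for `i = 1,2` iff it satisfies
`q̈₁ − (a/(2b²))e^{−aq₁}q̇₂² + (2c/b)e^{−aq₁}q̇₂ = 0` and
`q̈₂ − aq̇₁q̇₂ + 2bcq̇₁ = 0`. -/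
theorem euler_lagrange_iff_newton (a b c : ℝ) (ha : a ≠ 0) (hb : b ≠ 0) (hc : c ≠ 0)
    (q₁ q₂ q₁' q₂' q₁'' q₂'' : ℝ → ℝ)
    (hq₁ : ∀ t, HasDerivAt q₁ (q₁' t) t) (hq₂ : ∀ t, HasDerivAt q₂ (q₂' t) t)
    (hq₁' : ∀ t, HasDerivAt q₁' (q₁'' t) t) (hq₂' : ∀ t, HasDerivAt q₂' (q₂'' t) t) :
    ((∀ t, deriv (fun s => fderiv ℝ (lagrangianD0 a b c)
            ![q₁ s, q₂ s, q₁' s, q₂' s] (Pi.single 2 1)) t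
          = fderiv ℝ (lagrangianD0 a b c) ![q₁ t, q₂ t, q₁' t, q₂' t] (Pi.single 0 1))
      ∧ (∀ t, deriv (fun s => fderiv ℝ (lagrangianD0 a b c)
            ![q₁ s, q₂ s, q₁' s, q₂' s] (Pi.single 3 1)) t
          = fderiv ℝ (lagrangianD0 a b c) ![q₁ t, q₂ t, q₁' t, q₂' t] (Pi.single 1 1)))
    ↔ ((∀ t, q₁'' t - a / (2 * b ^ 2) * Real.exp (-a * q₁ t) * (q₂' t) ^ 2
              + 2 * c / b * Real.exp (-a * q₁ t) * q₂' t = 0)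
      ∧ (∀ t, q₂'' t - a * q₁' t * q₂' t + 2 * b * c * q₁' t = 0)) :=
  euler_lagrange_iff_newton_general a b c ha hb q₁ q₂ q₁' q₂' q₁'' q₂'' hq₁ hq₁' hq₂'
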